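/- Let θ ∈ {0,1/2} and let ε ∈ ℂ with 1+εk ≠ 0 for every integer k. Suppose G: ℤ×(ℤ+θ) → ℂ, H: (ℤ+θ)×ℤ → ℂ, D: (ℤ+θ)×(ℤ+θ) → ℂ satisfy, for all m,n ∈ ℤ and r,s,t ∈ ℤ+θ: G(m,r)(1+2εr) − H(r,m)(1+εm) = (m/2−r)(1+2ε(m+r)); D(r,s)(1+2εs) + D(s,r)(1+2εr) = 2+2ε(r+s); (m−n)G(m+n,r) = G(n,r)G(m,n+r) − G(m,r)G(n,m+r); (m/2−r)H(m+r,n) = H(r,n)G(m,n+r) + n·H(r,m+n); (m/2−r)D(m+r,s) = −(r+s)D(r,s) − G(m,s)D(r,m+s); −2m = H(s,m)D(r,m+s) + H(r,m)D(s,m+r); 2G(r+s,t) = D(s,t)H(r,s+t) + D(r,t)H(s,r+t). Then H(r,m) = −m / D(r,m+r) for all r ∈ ℤ+θ and m ∈ ℤ (in particular D(r,m+r) ≠ 0). -/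
import Mathlib


/-- membership in ℤ + θ -/
def InZT (θ x : ℂ) : Prop := ∃ k : ℤ, x = (k : ℂ) + θ

/-- under the normalized equations (3.6)–(3.12), H(r,m) = −m/D(r,m+r), and in particular D(r,m+r) ≠ 0 (equation (3.16)). -/
theorem H_eq_neg_m_div_D (θ ε : ℂ) (hθ : θ = 0 ∨ θ = 1 / 2)
    (hε : ∀ k : ℤ, 1 + ε * (k : ℂ) ≠ 0)
    (G H D : ℂ → ℂ → ℂ)
    (e1 : ∀ (m : ℤ) (r : ℂ), InZT θ r →
      G m r * (1 + 2 * ε * r) - H r m * (1 + ε * (m : ℂ))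
        = ((m : ℂ) / 2 - r) * (1 + 2 * ε * ((m : ℂ) + r)))
    (e2 : ∀ r s : ℂ, InZT θ r → InZT θ s →
      D r s * (1 + 2 * ε * s) + D s r * (1 + 2 * ε * r) = 2 + 2 * ε * (r + s))
    (e3 : ∀ (m n : ℤ) (r : ℂ), InZT θ r →
      ((m : ℂ) - (n : ℂ)) * G ((m : ℂ) + (n : ℂ)) r
        = G n r * G m ((n : ℂ) + r) - G m r * G n ((m : ℂ) + r))
    (e4 : ∀ (m n : ℤ) (r : ℂ), InZT θ r →
      ((m : ℂ) / 2 - r) * H ((m : ℂ) + r) n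
        = H r n * G m ((n : ℂ) + r) + (n : ℂ) * H r ((m : ℂ) + (n : ℂ)))
    (e5 : ∀ (m : ℤ) (r s : ℂ), InZT θ r → InZT θ s →
      ((m : ℂ) / 2 - r) * D ((m : ℂ) + r) s
        = -(r + s) * D r s - G m s * D r ((m : ℂ) + s))
    (e6 : ∀ (m : ℤ) (r s : ℂ), InZT θ r → InZT θ s →
      -2 * (m : ℂ) = H s m * D r ((m : ℂ) + s) + H r m * D s ((m : ℂ) + r))
    (e7 : ∀ r s t : ℂ, InZT θ r → InZT θ s → InZT θ t →
      2 * G (r + s) t = D s t * H r (s + t) + D r t * H s (r + t)) :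
    ∀ (r : ℂ) (m : ℤ), InZT θ r →
      D r ((m : ℂ) + r) ≠ 0 ∧ H r m = -(m : ℂ) / D r ((m : ℂ) + r) := by
  intro r m hr
  obtain ⟨k, hk⟩ := hr
  have hr' : InZT θ r := ⟨k, hk⟩
  have hprod : H r m * D r ((m : ℂ) + r) = -(m : ℂ) := by
    have h6 := e6 m r r hr' hr'
    linear_combination (-(1 : ℂ)/2) * h6
  by_cases hm : m = 0
  · subst hm
    have hne : (2 : ℂ) * (1 + 2 * ε * r) ≠ 0 := by
      have h2ne : (1 + 2 * ε * r) ≠ 0 := by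
        rcases hθ with h | h
        · have := hε (2 * k)
          subst h
          convert this using 2
          push_cast [hk]
          ring
        · have := hε (2 * k + 1)
          subst h
          convert this using 2
          push_cast [hk]
          ring
      exact mul_ne_zero two_ne_zero h2ne
    have hD : D r r = 1 := by
      have h2 := e2 r r hr' hr'
      have hz : (D r r - 1) * (2 * (1 + 2 * ε * r)) = 0 := by
        linear_combination h2
      rcases mul_eq_zero.mp hz with h | h
      · exact sub_eq_zero.mp h
      · exact absurd h hne
    have hDr : D r ((0 : ℤ) + r) = 1 := by push_cast; simpa using hD
    constructor
    · rw [hDr]; exact one_ne_zero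
    · rw [hDr] at hprod ⊢
      push_cast at hprod ⊢
      simpa using hprod
  · have hmc : (m : ℂ) ≠ 0 := Int.cast_ne_zero.mpr hm
    have hDne : D r ((m : ℂ) + r) ≠ 0 := by
      intro h
      rw [h, mul_zero] at hprod
      exact hmc (neg_eq_zero.mp hprod.symm)
    refine ⟨hDne, ?_⟩
    field_simp
    linear_combination hprod
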